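/- arXiv:2303.07614 — 2 statements merged into one kernel-verified Lean document; each statement's English description precedes it below -/
import Mathlib

section
/- Let H ∈ ℂ^{M×N}, A ∈ ℂ^{M×K}, F(W) = (1/2)‖HW − A‖_F², ∇F(W) = Hᴴ(HW − A), and suppose L > 0 satisfies ‖HX‖_F² ≤ L‖X‖_F² for all X ∈ ℂ^{N×K}. Fix η > 0, let Ω = {W ∈ ℂ^{N×K} : for every row index n, Σ_k |w_{n,k}|² ≤ η}, let 0 < α < 1/L, and let Wᵗ ∈ ℂ^{N×K}. If Wᵗ⁺¹ ∈ Ω is the metric projection of Wᵗ − α∇F(Wᵗ) onto Ω (i.e., ‖(Wᵗ − α∇F(Wᵗ)) − Wᵗ⁺¹‖_F ≤ ‖(Wᵗ − α∇F(Wᵗ)) − V‖_F for all V ∈ Ω) and Wᵗ ∈ Ω, then F(Wᵗ) − F(Wᵗ⁺¹) ≥ (1/α − L)‖Wᵗ − Wᵗ⁺¹‖_F². -/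
open Matrix
open scoped BigOperators

/-- Frobenius norm of a complex matrix. -/
noncomputable def frobNorm {m n : Type*} [Fintype m] [Fintype n] (X : Matrix m n ℂ) : ℝ :=
  Real.sqrt (∑ i, ∑ j, ‖X i j‖ ^ 2)

/-- Real part of the Frobenius inner product: Re(trace(Xᴴ Y)). -/
noncomputable def reInnerF {m n : Type*} [Fintype m] [Fintype n] (X Y : Matrix m n ℂ) : ℝ :=
  (Matrix.trace (Xᴴ * Y)).re

/-- Objective F(W) = (1/2)‖HW − A‖_F². -/
noncomputable def objF {M N K : ℕ} (H : Matrix (Fin M) (Fin N) ℂ)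
    (A : Matrix (Fin M) (Fin K) ℂ) (W : Matrix (Fin N) (Fin K) ℂ) : ℝ :=
  (1 / 2) * frobNorm (H * W - A) ^ 2

/-- Gradient ∇F(W) = Hᴴ(HW − A). -/
noncomputable def gradF {M N K : ℕ} (H : Matrix (Fin M) (Fin N) ℂ)
    (A : Matrix (Fin M) (Fin K) ℂ) (W : Matrix (Fin N) (Fin K) ℂ) :
    Matrix (Fin N) (Fin K) ℂ :=
  Hᴴ * (H * W - A)

/-- Feasible set Ω = {W : each row has squared norm ≤ η}. -/
def OmegaSet {N K : ℕ} (η : ℝ) : Set (Matrix (Fin N) (Fin K) ℂ) :=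
  {W | ∀ n, (∑ k, ‖W n k‖ ^ 2) ≤ η}

section auxlemmas
variable {m n p : Type*} [Fintype m] [Fintype n] [Fintype p]

lemma reInnerF_self (X : Matrix m n ℂ) : reInnerF X X = ∑ i, ∑ j, ‖X i j‖ ^ 2 := by
  simp [reInnerF, Matrix.trace, Matrix.diag, Matrix.mul_apply, Matrix.conjTranspose_apply,
    Complex.re_sum, Complex.mul_re, Complex.sq_norm, Complex.normSq_apply]
  exact Finset.sum_comm

lemma frobNorm_sq (X : Matrix m n ℂ) : frobNorm X ^ 2 = reInnerF X X := by
  rw [reInnerF_self, frobNorm, Real.sq_sqrt]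
  positivity

lemma reInnerF_comm (X Y : Matrix m n ℂ) : reInnerF X Y = reInnerF Y X := by
  simp [reInnerF]
  rw [show Yᴴ * X = (Xᴴ * Y)ᴴ by simp [Matrix.conjTranspose_mul]]
  rw [Matrix.trace_conjTranspose]
  simp

lemma reInnerF_sub_right (X Y Z : Matrix m n ℂ) :
    reInnerF X (Y - Z) = reInnerF X Y - reInnerF X Z := by
  simp [reInnerF, Matrix.mul_sub]

lemma reInnerF_sub_left (X Y Z : Matrix m n ℂ) :
    reInnerF (X - Y) Z = reInnerF X Z - reInnerF Y Z := by
  simp [reInnerF, Matrix.conjTranspose_sub, Matrix.sub_mul]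

lemma reInnerF_smul_right (a : ℝ) (X Y : Matrix m n ℂ) :
    reInnerF X (a • Y) = a * reInnerF X Y := by
  simp [reInnerF, Matrix.mul_smul]

lemma reInnerF_smul_left (a : ℝ) (X Y : Matrix m n ℂ) :
    reInnerF (a • X) Y = a * reInnerF X Y := by
  rw [reInnerF_comm, reInnerF_smul_right, reInnerF_comm]

lemma reInnerF_mulH (H : Matrix m n ℂ) (X : Matrix n p ℂ) (Y : Matrix m p ℂ) :
    reInnerF (H * X) Y = reInnerF X (Hᴴ * Y) := by
  rw [reInnerF, reInnerF, Matrix.conjTranspose_mul, Matrix.mul_assoc]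

lemma frobNorm_sub_sq (X Y : Matrix m n ℂ) :
    frobNorm (X - Y) ^ 2 = frobNorm X ^ 2 - 2 * reInnerF X Y + frobNorm Y ^ 2 := by
  rw [frobNorm_sq, frobNorm_sq, frobNorm_sq, reInnerF_sub_left, reInnerF_sub_right,
    reInnerF_sub_right, reInnerF_comm Y X]
  ring

end auxlemmas

lemma seg_mem {N K : ℕ} {η : ℝ} {X Y : Matrix (Fin N) (Fin K) ℂ}
    (hX : X ∈ OmegaSet η) (hY : Y ∈ OmegaSet η) {t : ℝ} (ht0 : 0 ≤ t) (ht1 : t ≤ 1) :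
    X + t • (Y - X) ∈ OmegaSet η := by
  intro nn
  have key : ∀ k, ‖(X + t • (Y - X)) nn k‖ ^ 2
      ≤ (1 - t) * ‖X nn k‖ ^ 2 + t * ‖Y nn k‖ ^ 2 := by
    intro k
    have h1 : (X + t • (Y - X)) nn k = ((1 - t : ℝ) : ℂ) * X nn k + (t : ℝ) * Y nn k := by
      simp [Matrix.add_apply, Matrix.smul_apply, Matrix.sub_apply, Complex.real_smul]
      ring
    have h2 : ‖(X + t • (Y - X)) nn k‖ ≤ (1 - t) * ‖X nn k‖ + t * ‖Y nn k‖ := by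
      rw [h1]
      calc ‖((1 - t : ℝ) : ℂ) * X nn k + (t : ℝ) * Y nn k‖
          ≤ ‖((1 - t : ℝ) : ℂ) * X nn k‖ + ‖((t : ℝ) : ℂ) * Y nn k‖ := norm_add_le _ _
        _ = (1 - t) * ‖X nn k‖ + t * ‖Y nn k‖ := by
            rw [norm_mul, norm_mul, Complex.norm_real, Complex.norm_real,
              Real.norm_eq_abs, Real.norm_eq_abs,
              abs_of_nonneg (show (0:ℝ) ≤ 1 - t by linarith), abs_of_nonneg ht0]
    nlinarith [norm_nonneg ((X + t • (Y - X)) nn k), norm_nonneg (X nn k), norm_nonneg (Y nn k),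
      sq_nonneg (‖X nn k‖ - ‖Y nn k‖),
      mul_nonneg ht0 (mul_nonneg (sub_nonneg.2 ht1) (sq_nonneg (‖X nn k‖ - ‖Y nn k‖)))]
  calc ∑ k, ‖(X + t • (Y - X)) nn k‖ ^ 2
      ≤ ∑ k, ((1 - t) * ‖X nn k‖ ^ 2 + t * ‖Y nn k‖ ^ 2) := Finset.sum_le_sum fun k _ => key k
    _ = (1 - t) * (∑ k, ‖X nn k‖ ^ 2) + t * (∑ k, ‖Y nn k‖ ^ 2) := by
        rw [Finset.sum_add_distrib, Finset.mul_sum, Finset.mul_sum]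
    _ ≤ (1 - t) * η + t * η := by
        gcongr <;> [exact hX nn; exact hY nn]
    _ = η := by ring

lemma le_zero_of_forall_le_mul {x c : ℝ} (hc : 0 ≤ c)
    (h : ∀ t : ℝ, 0 < t → t ≤ 1 → x ≤ t * c) : x ≤ 0 := by
  by_contra hx
  push_neg at hx
  rcases eq_or_lt_of_le hc with h0 | h0
  · have := h 1 one_pos le_rfl; nlinarith
  · have ht := h (min 1 (x / (2 * c))) (lt_min one_pos (by positivity)) (min_le_left _ _)
    have h2 : min 1 (x / (2 * c)) * c ≤ (x / (2 * c)) * c :=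
      mul_le_mul_of_nonneg_right (min_le_right _ _) hc
    have h3 : (x / (2 * c)) * c = x / 2 := by field_simp
    nlinarith

theorem pgd_step_decrease {M N K : ℕ}
    (H : Matrix (Fin M) (Fin N) ℂ) (A : Matrix (Fin M) (Fin K) ℂ)
    (L : ℝ) (hL : 0 < L)
    (hHL : ∀ X : Matrix (Fin N) (Fin K) ℂ, frobNorm (H * X) ^ 2 ≤ L * frobNorm X ^ 2)
    (η : ℝ) (hη : 0 < η) (α : ℝ) (hα0 : 0 < α) (hα : α < 1 / L)
    (Wt Wt1 : Matrix (Fin N) (Fin K) ℂ)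
    (hWt : Wt ∈ OmegaSet η) (hWt1 : Wt1 ∈ OmegaSet η)
    (hproj : ∀ V ∈ OmegaSet η,
      frobNorm ((Wt - α • gradF H A Wt) - Wt1) ≤ frobNorm ((Wt - α • gradF H A Wt) - V)) :
    objF H A Wt - objF H A Wt1 ≥ (1 / α - L) * frobNorm (Wt - Wt1) ^ 2 := by
  set G := gradF H A Wt with hG
  set w := Wt - Wt1 with hw
  set u := (Wt - α • G) - Wt1 with hu_def
  set s := frobNorm w ^ 2 with hs
  have hs0 : 0 ≤ s := by rw [hs]; positivity
  -- Step 1: variational inequality at the projection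
  have hvar : ∀ t : ℝ, 0 < t → t ≤ 1 → 2 * reInnerF u w ≤ t * s := by
    intro t ht0 ht1
    have hV : Wt1 + t • w ∈ OmegaSet η := by
      have := seg_mem hWt1 hWt (le_of_lt ht0) ht1
      simpa [hw] using this
    have hle := hproj _ hV
    have hsub : (Wt - α • G) - (Wt1 + t • w) = u - t • w := by
      rw [hu_def]; abel
    rw [hsub] at hle
    have hle2 : frobNorm u ^ 2 ≤ frobNorm (u - t • w) ^ 2 := by
      have h0 : 0 ≤ frobNorm u := Real.sqrt_nonneg _
      nlinarith [hle]
    have hexp : frobNorm (u - t • w) ^ 2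
        = frobNorm u ^ 2 - 2 * (t * reInnerF u w) + t * (t * s) := by
      rw [frobNorm_sub_sq, reInnerF_smul_right]
      congr 1
      rw [hs, frobNorm_sq, frobNorm_sq, reInnerF_smul_left, reInnerF_smul_right]
    rw [hexp] at hle2
    have h3 : t * (2 * reInnerF u w) ≤ t * (t * s) := by nlinarith
    exact le_of_mul_le_mul_left h3 ht0
  have hip : reInnerF u w ≤ 0 := by
    have := le_zero_of_forall_le_mul hs0 hvar
    linarith
  -- unpack u
  have hu2 : u = w - α • G := by rw [hu_def, hw]; abel
  have hkey : s ≤ α * reInnerF w G := by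
    have : reInnerF (w - α • G) w ≤ 0 := by rw [← hu2]; exact hip
    rw [reInnerF_sub_left, reInnerF_smul_left] at this
    have hsw : reInnerF w w = s := by rw [hs, frobNorm_sq]
    rw [reInnerF_comm G w] at this
    linarith
  -- Step 2: exact expansion of the objective
  have hW1 : H * Wt1 - A = (H * Wt - A) - H * w := by
    rw [hw, Matrix.mul_sub]; abel
  have hiprw : reInnerF (H * Wt - A) (H * w) = reInnerF w G := by
    rw [reInnerF_comm, reInnerF_mulH, hG, gradF, reInnerF_comm]
  have hobj : objF H A Wt - objF H A Wt1
      = reInnerF w G - (1 / 2) * frobNorm (H * w) ^ 2 := by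
    rw [objF, objF, hW1, frobNorm_sub_sq (H * Wt - A) (H * w), hiprw]
    ring
  have hHw : frobNorm (H * w) ^ 2 ≤ L * s := by rw [hs]; exact hHL w
  -- finish
  rw [hobj, ge_iff_le, sub_mul]
  have h1 : 1 / α * s ≤ reInnerF w G := by
    rw [div_mul_eq_mul_div, one_mul, div_le_iff₀ hα0]
    linarith [hkey]
  have hLs : 0 ≤ L * s := mul_nonneg hL.le hs0
  linarith
end

section
/- Let H ∈ ℂ^{M×N} and A ∈ ℂ^{M×K}, define F(W) = (1/2)‖HW − A‖_F², fix η > 0 and a nonnegative vector λ* ∈ ℝ^N, and let Ω = {W ∈ ℂ^{N×K} : for every row index n, Σ_k |w_{n,k}|² ≤ η}. Suppose W* ∈ ℂ^{N×K} satisfies the KKT conditions: (i) [HᴴH + Diag(λ*)]W* = HᴴA, (ii) W* ∈ Ω, and (iii) complementary slackness: for every n, λ*_n · (Σ_k |w*_{n,k}|² − η) = 0. Then W* minimizes F over Ω: F(W*) ≤ F(W) for all W ∈ Ω. -/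
open Matrix
open scoped BigOperators

lemma frob_sq {m n : Type*} [Fintype m] [Fintype n] (X : Matrix m n ℂ) :
    frobNorm X ^ 2 = ∑ i, ∑ j, ‖X i j‖ ^ 2 := by
  unfold frobNorm
  exact Real.sq_sqrt (by positivity)

lemma cnorm_add_sq (a b : ℂ) :
    ‖a + b‖ ^ 2 = ‖a‖ ^ 2 + 2 * ((starRingEnd ℂ) a * b).re + ‖b‖ ^ 2 := by
  simp only [Complex.sq_norm, Complex.normSq_apply, Complex.add_re,
    Complex.add_im, Complex.mul_re, Complex.conj_re, Complex.conj_im]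
  ring

lemma reInnerF_eq {m n : Type*} [Fintype m] [Fintype n] (X Y : Matrix m n ℂ) :
    reInnerF X Y = ∑ i, ∑ j, ((starRingEnd ℂ) (X i j) * Y i j).re := by
  unfold reInnerF
  rw [Matrix.trace]
  simp only [Matrix.diag_apply, Matrix.mul_apply, Matrix.conjTranspose_apply]
  rw [Complex.re_sum]
  rw [Finset.sum_comm]
  congr 1; ext i
  rw [Complex.re_sum]
  rfl

lemma frob_expand {m n : Type*} [Fintype m] [Fintype n] (X Y : Matrix m n ℂ) :
    frobNorm (X + Y) ^ 2 = frobNorm X ^ 2 + 2 * reInnerF X Y + frobNorm Y ^ 2 := by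
  rw [frob_sq, frob_sq, frob_sq, reInnerF_eq, Finset.mul_sum]
  rw [← Finset.sum_add_distrib, ← Finset.sum_add_distrib]
  congr 1; ext i
  rw [Finset.mul_sum, ← Finset.sum_add_distrib, ← Finset.sum_add_distrib]
  congr 1; ext j
  exact cnorm_add_sq _ _

lemma reInnerF_adj {M N K : ℕ} (H : Matrix (Fin M) (Fin N) ℂ)
    (X : Matrix (Fin M) (Fin K) ℂ) (D : Matrix (Fin N) (Fin K) ℂ) :
    reInnerF (Hᴴ * X) D = reInnerF X (H * D) := by
  unfold reInnerF
  rw [Matrix.conjTranspose_mul, Matrix.conjTranspose_conjTranspose, Matrix.mul_assoc]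

/-- Cauchy–Schwarz type row bound. -/
lemma row_bound {K : ℕ} (a b : Fin K → ℂ) (η : ℝ) (hη : 0 < η)
    (ha : ∑ k, ‖a k‖ ^ 2 = η) (hb : ∑ k, ‖b k‖ ^ 2 ≤ η) :
    ∑ k, ((starRingEnd ℂ) (a k) * b k).re ≤ η := by
  have h1 : ∑ k, ((starRingEnd ℂ) (a k) * b k).re ≤ ∑ k, ‖a k‖ * ‖b k‖ := by
    apply Finset.sum_le_sum
    intro k _
    calc ((starRingEnd ℂ) (a k) * b k).re ≤ ‖(starRingEnd ℂ) (a k) * b k‖ :=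
          Complex.re_le_norm _
      _ = ‖a k‖ * ‖b k‖ := by rw [norm_mul, RingHomIsometric.norm_map]
  have h2 : (∑ k, ‖a k‖ * ‖b k‖) ^ 2 ≤ (∑ k, ‖a k‖ ^ 2) * ∑ k, ‖b k‖ ^ 2 :=
    Finset.sum_mul_sq_le_sq_mul_sq _ _ _
  have h3 : 0 ≤ ∑ k, ‖a k‖ * ‖b k‖ :=
    Finset.sum_nonneg fun k _ => mul_nonneg (norm_nonneg _) (norm_nonneg _)
  have hbnn : 0 ≤ ∑ k, ‖b k‖ ^ 2 := Finset.sum_nonneg fun k _ => sq_nonneg _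
  nlinarith

theorem kkt_sufficient {M N K : ℕ}
    (H : Matrix (Fin M) (Fin N) ℂ) (A : Matrix (Fin M) (Fin K) ℂ)
    (η : ℝ) (hη : 0 < η)
    (lam : Fin N → ℝ) (hlam : ∀ n, 0 ≤ lam n)
    (Wstar : Matrix (Fin N) (Fin K) ℂ)
    (hstat : (Hᴴ * H + Matrix.diagonal fun n => (lam n : ℂ)) * Wstar = Hᴴ * A)
    (hfeas : Wstar ∈ OmegaSet η)
    (hslack : ∀ n, lam n * ((∑ k, ‖Wstar n k‖ ^ 2) - η) = 0) :
    ∀ W ∈ OmegaSet η, objF H A Wstar ≤ objF H A W := by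
  intro W hW
  set D : Matrix (Fin N) (Fin K) ℂ := W - Wstar with hD
  -- gradient formula from stationarity
  have hA : Hᴴ * A = Hᴴ * H * Wstar + (Matrix.diagonal fun n => (lam n : ℂ)) * Wstar := by
    rw [← hstat, Matrix.add_mul]
  have hgrad : gradF H A Wstar = -((Matrix.diagonal fun n => (lam n : ℂ)) * Wstar) := by
    unfold gradF
    rw [Matrix.mul_sub, ← Matrix.mul_assoc, hA]
    abel
  -- the first order term is nonnegative
  have hkey : 0 ≤ reInnerF (gradF H A Wstar) D := by
    rw [hgrad, reInnerF_eq]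
    apply Finset.sum_nonneg
    intro n _
    have hterm : ∀ k, ((starRingEnd ℂ)
        ((-((Matrix.diagonal fun n => (lam n : ℂ)) * Wstar)) n k) * D n k).re
        = lam n * (‖Wstar n k‖ ^ 2 - ((starRingEnd ℂ) (Wstar n k) * W n k).re) := by
      intro k
      have : ((Matrix.diagonal fun n => (lam n : ℂ)) * Wstar) n k
          = (lam n : ℂ) * Wstar n k := by
        rw [Matrix.diagonal_mul]
      simp only [Matrix.neg_apply, this, hD, Matrix.sub_apply, Complex.neg_re,
        Complex.sub_re, Complex.neg_im, Complex.sub_im, Complex.add_im, Complex.add_re, Complex.mul_re, Complex.mul_im, Complex.conj_re, Complex.conj_im,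
        Complex.ofReal_re, Complex.ofReal_im, Complex.sq_norm,
        Complex.normSq_apply]
      ring
    rw [Finset.sum_congr rfl fun k _ => hterm k, ← Finset.mul_sum]
    rcases eq_or_lt_of_le (hlam n) with h0 | hpos
    · rw [← h0]; simp
    · apply mul_nonneg (le_of_lt hpos)
      rw [Finset.sum_sub_distrib]
      have hsat : ∑ k, ‖Wstar n k‖ ^ 2 = η := by
        have := hslack n
        rcases mul_eq_zero.mp this with h | h
        · exact absurd h.symm (ne_of_lt hpos)
        · linarith
      have := row_bound (fun k => Wstar n k) (fun k => W n k) η hη hsat (hW n)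
      linarith
  -- quadratic expansion
  have hexp : objF H A W = objF H A Wstar + reInnerF (gradF H A Wstar) D
      + (1 / 2) * frobNorm (H * D) ^ 2 := by
    have hsplit : H * W - A = (H * Wstar - A) + H * D := by
      rw [hD, Matrix.mul_sub]
      abel
    unfold objF gradF
    rw [hsplit, frob_expand, ← reInnerF_adj]
    ring
  have hq : 0 ≤ (1 / 2) * frobNorm (H * D) ^ 2 := by positivity
  linarith [hexp, hkey, hq]
end
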